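/- arXiv:1207.5550 — 3 statements merged into one kernel-verified Lean document; each statement's English description precedes it below -/
import Mathlib

section
/- Let G be a graph embedded so that every face is a quadrilateral, with a fixed origin, and suppose χ is an edge-coloring assigning distinct colors to edges incident with a common vertex and equal colors to opposite edges of every face. Assume additionally that every vertex at distance g ≥ 1 from the origin with two neighbors at distance g−1 has those two neighbors together with a common neighbor at distance g−2 forming a quadrilateral face with it. Then χ is shortest-path-invariant: for any vertex a and any color k, every shortest path from the origin to a contains the same number of edges colored k. -/
/-- Lemma 2.8: in a quadrangulated graph with origin `v₀`, an edge coloring assigning distinct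
colors to edges at a common vertex and equal colors to opposite edges of every face (encoded by
the structural hypothesis: any two distinct parents `b, c` of a vertex `a` lie on a common
4-face with fourth vertex `d`, a common parent of `b` and `c`, and the coloring identifies
opposite edges) is shortest-path-invariant. -/
theorem stmt_4 {V : Type*} (G : SimpleGraph V) (v₀ : V) (l : ℕ) (χ : Sym2 V → Fin l)
    (hdist : ∀ a b c : V, G.Adj a b → G.Adj a c → b ≠ c → χ s(a, b) ≠ χ s(a, c))
    (hface : ∀ a b c : V, G.Adj a b → G.Adj a c → b ≠ c →
      G.dist v₀ b + 1 = G.dist v₀ a → G.dist v₀ c + 1 = G.dist v₀ a →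
      ∃ d : V, G.Adj b d ∧ G.Adj c d ∧ G.dist v₀ d + 2 = G.dist v₀ a ∧
        χ s(a, b) = χ s(c, d) ∧ χ s(a, c) = χ s(b, d)) :
    ∀ (a : V) (k : Fin l) (P Q : G.Walk v₀ a),
      P.length = G.dist v₀ a → Q.length = G.dist v₀ a →
      (P.edges.countP (fun e => χ e = k)) = (Q.edges.countP (fun e => χ e = k)) := by
  intro a k P Q hP hQ
  -- work with reversed walks (from a to v₀), inducting on the length
  suffices h : ∀ g : ℕ, ∀ (a : V) (P Q : G.Walk a v₀),
      G.dist v₀ a = g → P.length = g → Q.length = g →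
      (P.edges.countP (fun e => χ e = k)) = (Q.edges.countP (fun e => χ e = k)) by
    have := h (G.dist v₀ a) a P.reverse Q.reverse rfl
      (by rw [SimpleGraph.Walk.length_reverse, hP])
      (by rw [SimpleGraph.Walk.length_reverse, hQ])
    simpa [SimpleGraph.Walk.edges_reverse, List.countP_reverse] using this
  clear hP hQ P Q a
  intro g
  induction g using Nat.strong_induction_on with
  | _ g IH =>
    intro a P Q hd hP hQ
    rcases g with _ | g
    · have : P.edges = [] := List.length_eq_zero_iff.mp (by rw [P.length_edges, hP])
      have h2 : Q.edges = [] := List.length_eq_zero_iff.mp (by rw [Q.length_edges, hQ])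
      rw [this, h2]
    · -- decompose P and Q
      obtain ⟨b, hab, P', rfl⟩ := (SimpleGraph.Walk.not_nil_iff (p := P)).mp
        (fun hn => by simp [SimpleGraph.Walk.nil_iff_length_eq.mp hn] at hP)
      obtain ⟨c, hac, Q', rfl⟩ := (SimpleGraph.Walk.not_nil_iff (p := Q)).mp
        (fun hn => by simp [SimpleGraph.Walk.nil_iff_length_eq.mp hn] at hQ)
      simp only [SimpleGraph.Walk.length_cons, Nat.add_right_cancel_iff] at hP hQ
      -- distances of b and c
      have hreachb : G.Reachable v₀ b := ⟨P'.reverse⟩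
      have hreachc : G.Reachable v₀ c := ⟨Q'.reverse⟩
      have hdb : G.dist v₀ b + 1 = G.dist v₀ a := by
        obtain ⟨W, hW⟩ := hreachb.exists_walk_length_eq_dist
        have h1 : G.dist v₀ b ≤ g := hP ▸ (by simpa using SimpleGraph.dist_le P'.reverse)
        have h2 : G.dist v₀ a ≤ G.dist v₀ b + 1 := by
          have := SimpleGraph.dist_le (W.concat hab.symm)
          simpa [SimpleGraph.Walk.length_concat, hW] using this
        omega
      have hdc : G.dist v₀ c + 1 = G.dist v₀ a := by
        obtain ⟨W, hW⟩ := hreachc.exists_walk_length_eq_dist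
        have h1 : G.dist v₀ c ≤ g := hQ ▸ (by simpa using SimpleGraph.dist_le Q'.reverse)
        have h2 : G.dist v₀ a ≤ G.dist v₀ c + 1 := by
          have := SimpleGraph.dist_le (W.concat hac.symm)
          simpa [SimpleGraph.Walk.length_concat, hW] using this
        omega
      have hdb' : G.dist v₀ b = g := by omega
      have hdc' : G.dist v₀ c = g := by omega
      by_cases hbc : b = c
      · subst hbc
        have := IH g (by omega) b P' Q' hdb' hP hQ
        simp [SimpleGraph.Walk.edges_cons, List.countP_cons, this]
      · obtain ⟨d, hbd, hcd, hdd, hχ1, hχ2⟩ := hface a b c hab hac hbc hdb hdc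
        have hdd' : G.dist v₀ d = g - 1 := by omega
        have hg1 : 1 ≤ g := by omega
        have hreachd : G.Reachable v₀ d := hreachb.trans ⟨hbd.toWalk⟩
        obtain ⟨R, hR⟩ := hreachd.exists_walk_length_eq_dist
        -- walk from b to v₀ through d
        have hcount_b := IH g (by omega) b P' (SimpleGraph.Walk.cons hbd R.reverse) hdb' hP
          (by simp [hR, hdd']; omega)
        have hcount_c := IH g (by omega) c Q' (SimpleGraph.Walk.cons hcd R.reverse) hdc' hQ
          (by simp [hR, hdd']; omega)
        simp only [SimpleGraph.Walk.edges_cons, List.countP_cons] at hcount_b hcount_c ⊢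
        rw [hcount_b, hcount_c]
        rw [hχ1, hχ2]
        omega
end

section
/- Let Ξ be a finite directed graph with vertices partitioned into terminals X and non-terminals Y, where each vertex is classified as 'one-parent' or 'two-parent', with in-degree at most 1 or at most 2 respectively. Suppose: every non-terminal one-parent vertex has out-degree ≥ 3, of which at most 2 out-edges are 'special'; every non-terminal two-parent vertex has out-degree ≥ 2, none of its out-edges is special, and at least one of its (at most 2) in-edges is special; special edges always go from one-parent vertices to two-parent vertices. Assign flow 1 to special edges and flow 3 to all other edges. Then every non-terminal has net out-flow ≥ 2, every terminal has in-flow ≤ 6, and consequently |Y| ≤ 3·|X|, so |X ∪ Y| ≤ 4·|X|. -/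
open Finset

private lemma fsum {V : Type*} [DecidableEq V] (special S : Finset (V × V)) :
    (∑ e ∈ S, if e ∈ special then (1 : ℝ) else 3)
      = 3 * S.card - 2 * (S.filter (fun e => e ∈ special)).card := by
  have h : ∀ e ∈ S, (if e ∈ special then (1 : ℝ) else 3)
      = 3 - (if e ∈ special then (2 : ℝ) else 0) := by
    intro e _; split <;> ring
  rw [Finset.sum_congr rfl h, Finset.sum_sub_distrib, ← Finset.sum_filter,
    Finset.sum_const, Finset.sum_const]
  push_cast; ring

private lemma ffilter {V : Type*} [DecidableEq V] {special Z : Finset (V × V)}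
    (h : special ⊆ Z) (p : V × V → Prop) [DecidablePred p] :
    (Z.filter p).filter (fun e => e ∈ special) = special.filter p := by
  ext e
  simp only [Finset.mem_filter]
  exact ⟨fun ⟨⟨_, hp⟩, hs⟩ => ⟨hs, hp⟩, fun ⟨hs, hp⟩ => ⟨⟨h hs, hp⟩, hs⟩⟩

/-- Flow argument for explanation graphs in {4,q}, q ≥ 7 (Proposition 4.4): vertices are
terminals X or non-terminals Y, each one-parent (in-degree ≤ 1) or two-parent (in-degree ≤ 2);
special edges go from one-parent vertices to two-parent vertices; non-terminal one-parent
vertices have out-degree ≥ 3 with at most 2 special out-edges; non-terminal two-parent vertices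
have out-degree ≥ 2, no special out-edges, and at least one special in-edge.  With flow 1 on
special edges and 3 on others: every non-terminal has net out-flow ≥ 2, every terminal has
in-flow ≤ 6, and |Y| ≤ 3·|X|, so |X ∪ Y| ≤ 4·|X|. -/
theorem stmt_12 {V : Type*} [DecidableEq V] (X Y : Finset V) (hXY : Disjoint X Y)
    (Z special : Finset (V × V)) (hspecZ : special ⊆ Z)
    (hZ : ∀ e ∈ Z, e.1 ∈ X ∪ Y ∧ e.2 ∈ X ∪ Y)
    (onep : V → Prop) [DecidablePred onep]
    (hspec : ∀ e ∈ special, onep e.1 ∧ ¬onep e.2)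
    (hin1 : ∀ v : V, onep v → (Z.filter (fun e => e.2 = v)).card ≤ 1)
    (hin2 : ∀ v : V, ¬onep v → (Z.filter (fun e => e.2 = v)).card ≤ 2)
    (hout1 : ∀ v ∈ Y, onep v → 3 ≤ (Z.filter (fun e => e.1 = v)).card ∧
      (special.filter (fun e => e.1 = v)).card ≤ 2)
    (hout2 : ∀ v ∈ Y, ¬onep v → 2 ≤ (Z.filter (fun e => e.1 = v)).card ∧
      (special.filter (fun e => e.1 = v)).card = 0 ∧
      1 ≤ (special.filter (fun e => e.2 = v)).card) :
    (∀ v ∈ Y, (2 : ℝ) ≤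
        (∑ e ∈ Z.filter (fun e => e.1 = v), if e ∈ special then (1 : ℝ) else 3) -
        ∑ e ∈ Z.filter (fun e => e.2 = v), if e ∈ special then (1 : ℝ) else 3) ∧
    (∀ v ∈ X, (∑ e ∈ Z.filter (fun e => e.2 = v), if e ∈ special then (1 : ℝ) else 3) ≤ 6) ∧
    Y.card ≤ 3 * X.card ∧ (X ∪ Y).card ≤ 4 * X.card := by
  have part1 : ∀ v ∈ Y, (2 : ℝ) ≤
      (∑ e ∈ Z.filter (fun e => e.1 = v), if e ∈ special then (1 : ℝ) else 3) -
      ∑ e ∈ Z.filter (fun e => e.2 = v), if e ∈ special then (1 : ℝ) else 3 := by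
    intro v hv
    rw [fsum, fsum, ffilter hspecZ, ffilter hspecZ]
    have hsub : special.filter (fun e => e.2 = v) ⊆ Z.filter (fun e => e.2 = v) :=
      Finset.filter_subset_filter _ hspecZ
    have hisic : (special.filter (fun e => e.2 = v)).card
        ≤ (Z.filter (fun e => e.2 = v)).card := Finset.card_le_card hsub
    by_cases h : onep v
    · obtain ⟨h3, h2⟩ := hout1 v hv h
      have hi := hin1 v h
      have c1 : (3 : ℝ) ≤ (Z.filter (fun e => e.1 = v)).card := by exact_mod_cast h3
      have c2 : ((special.filter (fun e => e.1 = v)).card : ℝ) ≤ 2 := by exact_mod_cast h2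
      have c3 : ((Z.filter (fun e => e.2 = v)).card : ℝ) ≤ 1 := by exact_mod_cast hi
      have c4 : (0 : ℝ) ≤ ((special.filter (fun e => e.2 = v)).card : ℝ) := by positivity
      linarith
    · obtain ⟨h2, hzero, hone⟩ := hout2 v hv h
      have hi := hin2 v h
      have c1 : (2 : ℝ) ≤ (Z.filter (fun e => e.1 = v)).card := by exact_mod_cast h2
      have c2 : ((special.filter (fun e => e.1 = v)).card : ℝ) = 0 := by exact_mod_cast hzero
      have c3 : ((Z.filter (fun e => e.2 = v)).card : ℝ) ≤ 2 := by exact_mod_cast hi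
      have c4 : (1 : ℝ) ≤ ((special.filter (fun e => e.2 = v)).card : ℝ) := by exact_mod_cast hone
      have c5 : ((special.filter (fun e => e.2 = v)).card : ℝ)
          ≤ ((Z.filter (fun e => e.2 = v)).card : ℝ) := by exact_mod_cast hisic
      linarith
  have part2 : ∀ v ∈ X,
      (∑ e ∈ Z.filter (fun e => e.2 = v), if e ∈ special then (1 : ℝ) else 3) ≤ 6 := by
    intro v _
    rw [fsum, ffilter hspecZ]
    have hic : (Z.filter (fun e => e.2 = v)).card ≤ 2 := by
      by_cases h : onep v
      · exact le_trans (hin1 v h) (by norm_num)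
      · exact hin2 v h
    have c1 : ((Z.filter (fun e => e.2 = v)).card : ℝ) ≤ 2 := by exact_mod_cast hic
    have c2 : (0 : ℝ) ≤ ((special.filter (fun e => e.2 = v)).card : ℝ) := by positivity
    linarith
  refine ⟨part1, part2, ?_⟩
  -- counting argument
  have hf0 : ∀ e : V × V, (0 : ℝ) ≤ (if e ∈ special then (1 : ℝ) else 3) := by
    intro e; split <;> norm_num
  have htotout : ∑ v ∈ X ∪ Y, ∑ e ∈ Z.filter (fun e => e.1 = v),
      (if e ∈ special then (1 : ℝ) else 3) = ∑ e ∈ Z, if e ∈ special then (1 : ℝ) else 3 :=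
    Finset.sum_fiberwise_of_maps_to (fun e he => (hZ e he).1) _
  have htotin : ∑ v ∈ X ∪ Y, ∑ e ∈ Z.filter (fun e => e.2 = v),
      (if e ∈ special then (1 : ℝ) else 3) = ∑ e ∈ Z, if e ∈ special then (1 : ℝ) else 3 :=
    Finset.sum_fiberwise_of_maps_to (fun e he => (hZ e he).2) _
  rw [Finset.sum_union hXY] at htotout htotin
  have hYout : (2 : ℝ) * Y.card ≤
      ∑ v ∈ Y, ((∑ e ∈ Z.filter (fun e => e.1 = v), if e ∈ special then (1 : ℝ) else 3) -
        ∑ e ∈ Z.filter (fun e => e.2 = v), if e ∈ special then (1 : ℝ) else 3) := by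
    calc (2 : ℝ) * Y.card = ∑ _v ∈ Y, (2 : ℝ) := by rw [Finset.sum_const]; push_cast; ring
    _ ≤ _ := Finset.sum_le_sum part1
  rw [Finset.sum_sub_distrib] at hYout
  have hXin : ∑ v ∈ X, (∑ e ∈ Z.filter (fun e => e.2 = v),
      if e ∈ special then (1 : ℝ) else 3) ≤ 6 * X.card := by
    calc _ ≤ ∑ _v ∈ X, (6 : ℝ) := Finset.sum_le_sum part2
    _ = 6 * X.card := by rw [Finset.sum_const]; push_cast; ring
  have hXout : (0 : ℝ) ≤ ∑ v ∈ X, ∑ e ∈ Z.filter (fun e => e.1 = v),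
      (if e ∈ special then (1 : ℝ) else 3) :=
    Finset.sum_nonneg fun v _ => Finset.sum_nonneg fun e _ => hf0 e
  have key : (2 : ℝ) * Y.card ≤ 6 * X.card := by linarith
  have hYX : Y.card ≤ 3 * X.card := by
    have : (Y.card : ℝ) ≤ 3 * X.card := by linarith
    exact_mod_cast this
  refine ⟨hYX, ?_⟩
  calc (X ∪ Y).card ≤ X.card + Y.card := Finset.card_union_le X Y
  _ ≤ 4 * X.card := by omega
end

section
/- Let Ξ be a finite directed graph with vertices partitioned into terminals X and non-terminals Y, where edges are of two kinds, 'sibling' edges (flow 2) and other edges (flow 3), and each vertex is 'one-parent' (in-degree from non-sibling edges ≤ 1, at most one sibling in-edge) or 'two-parent' (in-degree from non-sibling edges ≤ 2, no sibling in-edges). Suppose every non-terminal one-parent vertex has out-degree ≥ 2 with no sibling out-edges, and every non-terminal two-parent vertex has out-degree ≥ 3 with at most 2 sibling out-edges. Then every non-terminal has net out-flow ≥ 1, every terminal has in-flow ≤ 6, and hence |Y| ≤ 6·|X| and |X ∪ Y| ≤ 7·|X|. -/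
open Finset

lemma flow_split {V : Type*} [DecidableEq V] (Z sib : Finset (V × V)) (hsibZ : sib ⊆ Z)
    (p : V × V → Prop) [DecidablePred p] :
    (∑ e ∈ Z.filter p, if e ∈ sib then (2 : ℝ) else 3) =
      2 * (sib.filter p).card + 3 * ((Z \ sib).filter p).card := by
  have hZeq : Z = sib ∪ (Z \ sib) := (Finset.union_sdiff_of_subset hsibZ).symm
  nth_rewrite 1 [hZeq]
  rw [Finset.filter_union, Finset.sum_union]
  · rw [Finset.sum_congr rfl (fun e he => if_pos (Finset.mem_filter.mp he).1),
      Finset.sum_congr rfl (g := fun _ => (3:ℝ))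
        (fun e he => if_neg (Finset.mem_sdiff.mp (Finset.mem_filter.mp he).1).2),
      Finset.sum_const, Finset.sum_const]
    push_cast; ring
  · exact Finset.disjoint_filter_filter Finset.sdiff_disjoint.symm

/-- Flow argument for explanation graphs in {3,q}, q ≥ 9 (Proposition 4.5): vertices are
terminals X or non-terminals Y; edges are sibling edges (flow 2) or other edges (flow 3);
one-parent vertices have at most 1 non-sibling in-edge and at most 1 sibling in-edge,
two-parent vertices at most 2 non-sibling in-edges and no sibling in-edges; non-terminal
one-parent vertices have out-degree ≥ 2 with no sibling out-edges; non-terminal two-parent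
vertices have out-degree ≥ 3 with at most 2 sibling out-edges.  Then every non-terminal has
net out-flow ≥ 1, every terminal has in-flow ≤ 6, and |Y| ≤ 6·|X|, so |X ∪ Y| ≤ 7·|X|. -/
theorem stmt_13 {V : Type*} [DecidableEq V] (X Y : Finset V) (hXY : Disjoint X Y)
    (Z sib : Finset (V × V)) (hsibZ : sib ⊆ Z)
    (hZ : ∀ e ∈ Z, e.1 ∈ X ∪ Y ∧ e.2 ∈ X ∪ Y)
    (onep : V → Prop) [DecidablePred onep]
    (hin1 : ∀ v : V, onep v → ((Z \ sib).filter (fun e => e.2 = v)).card ≤ 1 ∧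
      (sib.filter (fun e => e.2 = v)).card ≤ 1)
    (hin2 : ∀ v : V, ¬onep v → ((Z \ sib).filter (fun e => e.2 = v)).card ≤ 2 ∧
      (sib.filter (fun e => e.2 = v)).card = 0)
    (hout1 : ∀ v ∈ Y, onep v → 2 ≤ (Z.filter (fun e => e.1 = v)).card ∧
      (sib.filter (fun e => e.1 = v)).card = 0)
    (hout2 : ∀ v ∈ Y, ¬onep v → 3 ≤ (Z.filter (fun e => e.1 = v)).card ∧
      (sib.filter (fun e => e.1 = v)).card ≤ 2) :
    (∀ v ∈ Y, (1 : ℝ) ≤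
        (∑ e ∈ Z.filter (fun e => e.1 = v), if e ∈ sib then (2 : ℝ) else 3) -
        ∑ e ∈ Z.filter (fun e => e.2 = v), if e ∈ sib then (2 : ℝ) else 3) ∧
    (∀ v ∈ X, (∑ e ∈ Z.filter (fun e => e.2 = v), if e ∈ sib then (2 : ℝ) else 3) ≤ 6) ∧
    Y.card ≤ 6 * X.card ∧ (X ∪ Y).card ≤ 7 * X.card := by
  set f : V × V → ℝ := fun e => if e ∈ sib then (2 : ℝ) else 3 with hf
  have hfnn : ∀ e, 0 ≤ f e := by
    intro e; simp only [hf]; split <;> norm_num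
  -- in-flow bound for every vertex
  have hin : ∀ v : V, (∑ e ∈ Z.filter (fun e => e.2 = v), f e) ≤ 6 := by
    intro v
    rw [flow_split Z sib hsibZ]
    by_cases h : onep v
    · obtain ⟨h1, h2⟩ := hin1 v h
      have := (Nat.cast_le (α := ℝ)).mpr h1
      have := (Nat.cast_le (α := ℝ)).mpr h2
      push_cast at *; nlinarith
    · obtain ⟨h1, h2⟩ := hin2 v h
      have := (Nat.cast_le (α := ℝ)).mpr h1
      rw [h2]; push_cast at *; nlinarith
  -- net out-flow ≥ 1 for non-terminals
  have hnet : ∀ v ∈ Y, (1 : ℝ) ≤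
      (∑ e ∈ Z.filter (fun e => e.1 = v), f e) - ∑ e ∈ Z.filter (fun e => e.2 = v), f e := by
    intro v hv
    have hinv := hin v
    rw [flow_split Z sib hsibZ, flow_split Z sib hsibZ]
    rw [flow_split Z sib hsibZ] at hinv
    by_cases h : onep v
    · obtain ⟨h1, h2⟩ := hout1 v hv h
      obtain ⟨h3, h4⟩ := hin1 v h
      -- out: sib out = 0, so Z.filter card = (Z\sib).filter card ≥ 2, flow ≥ 6; in ≤ 5
      have hcard : (Z.filter (fun e => e.1 = v)).card =
          (sib.filter (fun e => e.1 = v)).card + ((Z \ sib).filter (fun e => e.1 = v)).card := by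
        rw [← Finset.card_union_of_disjoint
            (Finset.disjoint_filter_filter Finset.sdiff_disjoint.symm),
          ← Finset.filter_union, Finset.union_sdiff_of_subset hsibZ]
      rw [hcard, h2] at h1
      have := (Nat.cast_le (α := ℝ)).mpr h1
      have := (Nat.cast_le (α := ℝ)).mpr h3
      have := (Nat.cast_le (α := ℝ)).mpr h4
      rw [h2]; push_cast at *; nlinarith
    · obtain ⟨h1, h2⟩ := hout2 v hv h
      obtain ⟨h3, h4⟩ := hin2 v h
      have hcard : (Z.filter (fun e => e.1 = v)).card =
          (sib.filter (fun e => e.1 = v)).card + ((Z \ sib).filter (fun e => e.1 = v)).card := by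
        rw [← Finset.card_union_of_disjoint
            (Finset.disjoint_filter_filter Finset.sdiff_disjoint.symm),
          ← Finset.filter_union, Finset.union_sdiff_of_subset hsibZ]
      rw [hcard] at h1
      have := (Nat.cast_le (α := ℝ)).mpr h1
      have := (Nat.cast_le (α := ℝ)).mpr h2
      have := (Nat.cast_le (α := ℝ)).mpr h3
      rw [h4]; push_cast at *; nlinarith
  have hY : Y.card ≤ 6 * X.card := by
    have hout_tot : ∑ v ∈ X ∪ Y, (∑ e ∈ Z.filter (fun e => e.1 = v), f e) = ∑ e ∈ Z, f e :=
      Finset.sum_fiberwise_of_maps_to (fun e he => (hZ e he).1) f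
    have hin_tot : ∑ v ∈ X ∪ Y, (∑ e ∈ Z.filter (fun e => e.2 = v), f e) = ∑ e ∈ Z, f e :=
      Finset.sum_fiberwise_of_maps_to (fun e he => (hZ e he).2) f
    have hzero : ∑ v ∈ X ∪ Y,
        ((∑ e ∈ Z.filter (fun e => e.1 = v), f e) - ∑ e ∈ Z.filter (fun e => e.2 = v), f e) = 0 := by
      rw [Finset.sum_sub_distrib, hout_tot, hin_tot, sub_self]
    rw [Finset.sum_union hXY] at hzero
    have hYle : (Y.card : ℝ) ≤ ∑ v ∈ Y,
        ((∑ e ∈ Z.filter (fun e => e.1 = v), f e) - ∑ e ∈ Z.filter (fun e => e.2 = v), f e) := by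
      calc (Y.card : ℝ) = ∑ _v ∈ Y, (1 : ℝ) := by simp [mul_comm]
        _ ≤ _ := Finset.sum_le_sum hnet
    have hXge : -(6 * (X.card:ℝ)) ≤ ∑ v ∈ X,
        ((∑ e ∈ Z.filter (fun e => e.1 = v), f e) - ∑ e ∈ Z.filter (fun e => e.2 = v), f e) := by
      have h6 : ∀ v ∈ X, -(6:ℝ) ≤
          (∑ e ∈ Z.filter (fun e => e.1 = v), f e) - ∑ e ∈ Z.filter (fun e => e.2 = v), f e := by
        intro v _
        have h1 := hin v
        have h2 : (0:ℝ) ≤ ∑ e ∈ Z.filter (fun e => e.1 = v), f e :=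
          Finset.sum_nonneg fun e _ => hfnn e
        linarith
      calc -(6 * (X.card:ℝ)) = ∑ _v ∈ X, (-6 : ℝ) := by simp [mul_comm]
        _ ≤ _ := Finset.sum_le_sum h6
    have : (Y.card : ℝ) ≤ 6 * X.card := by linarith
    exact_mod_cast this
  refine ⟨hnet, fun v _ => hin v, hY, ?_⟩
  calc (X ∪ Y).card ≤ X.card + Y.card := Finset.card_union_le X Y
    _ ≤ X.card + 6 * X.card := by omega
    _ = 7 * X.card := by ring
end
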